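/- arXiv:1504.05064 — 3 statements merged into one kernel-verified Lean document; each statement's English description precedes it below -/
import Mathlib

section
/- Let $b:\overline{\mathbb{D}}\setminus\{1\}\to\mathbb{C}$ be analytic on the open unit disc, and suppose there exist constants $C_1,C_2>0$ and $\beta\in(0,1)$ such that for all $u>0$, $h>0$, and $\theta\in(-\pi,\pi]$ one has $|b(e^{-(u-i\theta)})|\le C_1$ and $|b(e^{-(u-i(\theta+h))}) - b(e^{-(u-i\theta)})| \le C_2 h^{\beta} |u-i\theta|^{-\beta}$. Then the Taylor coefficients $b_n$ of $b$ at $0$ satisfy $b_n = O(n^{-\beta})$. -/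
/-!
With `r = e^{-1/n}` and `g θ = b (r e^{iθ})`, Cauchy's formula reads
`2π r^n c_n = ∫_{-π}^{π} g θ e^{-inθ} dθ`. Shifting `θ` by `π/n`, half a period of `e^{-inθ}`,
changes the sign of the kernel, so twice the integral is `∫ (g θ - g (θ + π/n)) e^{-inθ} dθ`.
The Hölder bound makes the integrand at most `C₂ (π/n)^β |θ|^{-β}`, which is integrable since
`β < 1`, and `r^n = e^{-1}` gives `|c_n| ≤ e C₂ n^{-β} / (2(1-β))`.
-/

open Complex Real MeasureTheory intervalIntegral Function Set

lemma exp_int_mul_add_two_pi_mul_I (m : ℤ) (θ : ℝ) :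
    cexp (m * ↑(θ + 2 * π) * I) = cexp (m * θ * I) := by
  rw [show (m : ℂ) * ↑(θ + 2 * π) * I = m * θ * I + m * (2 * π * I) by push_cast; ring,
    Complex.exp_add, exp_int_mul_two_pi_mul_I, mul_one]

lemma integral_exp_int_mul_I (m : ℤ) :
    ∫ θ in (-π)..π, cexp (m * θ * I) = if m = 0 then (2 * π : ℂ) else 0 := by
  split_ifs with hm
  · simp [hm, two_mul]
  · have hmI : (m : ℂ) * I ≠ 0 := by simp [hm]
    have hper := exp_int_mul_add_two_pi_mul_I m (-π)
    rw [show -π + 2 * π = π by ring] at hper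
    simp_rw [mul_right_comm (m : ℂ) _ I] at hper ⊢
    rw [integral_exp_mul_complex hmI, hper, sub_self, zero_div]

lemma exp_neg_int_mul_add_pi_div_mul_I {m : ℤ} (hm : m ≠ 0) (θ : ℝ) :
    cexp (-(m * ↑(θ + π / m) * I)) = -cexp (-(m * θ * I)) := by
  have hm' : (m : ℂ) ≠ 0 := by exact_mod_cast hm
  rw [show -((m : ℂ) * ↑(θ + π / m) * I) = -(m * θ * I) + -(π * I) by
      push_cast; field_simp; ring,
    Complex.exp_add, Complex.exp_neg (π * I), exp_pi_mul_I]
  simp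

lemma two_mul_integral_eq_integral_sub_shift {g : ℝ → ℂ} (hg : Continuous g)
    (hper : Periodic g (2 * π)) {m : ℤ} (hm : m ≠ 0) :
    2 * ∫ θ in (-π)..π, g θ * cexp (-(m * θ * I)) =
      ∫ θ in (-π)..π, (g θ - g (θ + π / m)) * cexp (-(m * θ * I)) := by
  set G : ℝ → ℂ := fun θ => g θ * cexp (-(m * θ * I))
  have hGper : Periodic G (2 * π) := fun θ => by
    simp only [G, hper θ, Complex.exp_neg, exp_int_mul_add_two_pi_mul_I]
  have hshift : ∫ θ in (-π)..π, g (θ + π / m) * cexp (-(m * θ * I)) =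
      -∫ θ in (-π)..π, G θ := by
    have hG : ∀ θ, g (θ + π / m) * cexp (-(m * θ * I)) = -G (θ + π / m) := fun θ => by
      simp only [G, exp_neg_int_mul_add_pi_div_mul_I hm]; ring
    simp_rw [hG, intervalIntegral.integral_neg, intervalIntegral.integral_comp_add_right G]
    have := hGper.intervalIntegral_add_eq (-π + π / m) (-π)
    rw [show -π + π / m + 2 * π = π + π / m by ring, show -π + 2 * π = π by ring] at this
    rw [this]
  have hcont : Continuous fun θ : ℝ => g (θ + π / m) * cexp (-(m * θ * I)) := by
    have := hg.comp (continuous_add_const (π / m)); fun_prop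
  have hGcont : Continuous G := hg.mul (by fun_prop)
  simp_rw [sub_mul]
  rw [intervalIntegral.integral_sub (hGcont.intervalIntegrable _ _)
    (hcont.intervalIntegrable _ _), hshift]
  ring

lemma intervalIntegrable_abs_rpow {s : ℝ} (hs : -1 < s) (a b : ℝ) :
    IntervalIntegrable (fun x : ℝ => |x| ^ s) volume a b := by
  have hpos : ∀ c : ℝ, 0 ≤ c → IntervalIntegrable (fun x : ℝ => |x| ^ s) volume 0 c := by
    intro c hc
    refine (intervalIntegrable_rpow' hs).congr fun x hx => ?_
    rw [uIoc_of_le hc] at hx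
    simp only [abs_of_pos hx.1]
  have hall : ∀ c : ℝ, IntervalIntegrable (fun x : ℝ => |x| ^ s) volume 0 c := by
    intro c
    rcases le_total 0 c with hc | hc
    · exact hpos c hc
    · simpa using (IntervalIntegrable.iff_comp_neg (f := fun x : ℝ => |x| ^ s)).mp
        (hpos (-c) (by linarith))
  exact (hall a).symm.trans (hall b)

lemma integral_abs_rpow {s : ℝ} (hs : -1 < s) {a : ℝ} (ha : 0 ≤ a) :
    ∫ x in (-a)..a, |x| ^ s = 2 * a ^ (s + 1) / (s + 1) := by
  have hpos : ∫ x in (0:ℝ)..a, |x| ^ s = a ^ (s + 1) / (s + 1) := by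
    rw [integral_congr (g := fun x => x ^ s) fun x hx => by
        rw [abs_of_nonneg (uIcc_of_le ha ▸ hx).1],
      integral_rpow (Or.inl hs), zero_rpow (by linarith), sub_zero]
  have hneg : ∫ x in (-a)..0, |x| ^ s = a ^ (s + 1) / (s + 1) := by
    have := integral_comp_neg (fun x => |x| ^ s) (a := 0) (b := a)
    simp only [abs_neg, neg_zero] at this
    rw [← this, hpos]
  rw [← integral_add_adjacent_intervals (intervalIntegrable_abs_rpow hs _ _)
    (intervalIntegrable_abs_rpow hs _ _), hneg, hpos]
  ring

lemma norm_integral_mul_exp_le {g : ℝ → ℂ} (hg : Continuous g) (hper : Periodic g (2 * π))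
    {m : ℤ} (hm : m ≠ 0) {K s : ℝ} (hs : -1 < s)
    (hK : ∀ θ ∈ Ioc (-π) π, θ ≠ 0 → ‖g θ - g (θ + π / m)‖ ≤ K * |θ| ^ s) :
    ‖∫ θ in (-π)..π, g θ * cexp (-(m * θ * I))‖ ≤ K * π ^ (s + 1) / (s + 1) := by
  have hne : ∀ᵐ θ : ℝ, θ ≠ 0 := compl_mem_ae_iff.mpr (measure_singleton 0)
  have hdiff := norm_integral_le_of_norm_le
    (f := fun θ => (g θ - g (θ + π / m)) * cexp (-(m * θ * I))) (by linarith [pi_pos] : -π ≤ π)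
    (by filter_upwards [hne] with θ hθ0 hθ
        simpa [Complex.norm_exp] using hK θ hθ hθ0)
    ((intervalIntegrable_abs_rpow hs _ _).const_mul K)
  rw [intervalIntegral.integral_const_mul, integral_abs_rpow hs pi_pos.le,
    ← two_mul_integral_eq_integral_sub_shift hg hper hm, norm_mul, Complex.norm_two,
    mul_div_assoc, mul_left_comm] at hdiff
  rw [mul_div_assoc]
  linarith

lemma circleMap_zero_pow_mul_exp (r θ : ℝ) (k n : ℕ) :
    circleMap 0 r θ ^ k * cexp (-(n * θ * I)) = r ^ k * cexp (((k - n : ℤ) : ℂ) * θ * I) := by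
  rw [circleMap_zero, mul_pow, ← Complex.exp_nat_mul, mul_assoc, ← Complex.exp_add]
  push_cast
  ring_nf

lemma integral_circleMap_mul_exp_eq {f : ℂ → ℂ} {c : ℕ → ℂ} {r : ℝ} (hr : 0 ≤ r)
    (hf : ∀ z ∈ Metric.sphere (0 : ℂ) r, HasSum (fun k => c k * z ^ k) (f z)) (n : ℕ) :
    ∫ θ in (-π)..π, f (circleMap 0 r θ) * cexp (-(n * θ * I)) = 2 * π * c n * r ^ n := by
  have hsum : HasSum (fun k => ∫ θ in (-π)..π, c k * circleMap 0 r θ ^ k * cexp (-(n * θ * I)))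
      (∫ θ in (-π)..π, f (circleMap 0 r θ) * cexp (-(n * θ * I))) := by
    refine intervalIntegral.hasSum_integral_of_dominated_convergence (fun k _ => ‖c k‖ * r ^ k)
      (fun k => (by fun_prop : Continuous _).aestronglyMeasurable)
      (fun k => ae_of_all _ fun θ _ => ?_) (ae_of_all _ fun _ _ => ?_) intervalIntegrable_const
      (ae_of_all _ fun θ _ => (hf _ (circleMap_mem_sphere 0 hr θ)).mul_right _)
    · simp [Complex.norm_exp, abs_of_nonneg hr]
    · simpa [abs_of_nonneg hr] using (hf r (by simp [abs_of_nonneg hr])).summable.norm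
  have hterm : ∀ k, ∫ θ in (-π)..π, c k * circleMap 0 r θ ^ k * cexp (-(n * θ * I)) =
      if k = n then 2 * π * c n * r ^ n else 0 := fun k => by
    simp_rw [mul_assoc (c k), circleMap_zero_pow_mul_exp, intervalIntegral.integral_const_mul,
      integral_exp_int_mul_I, sub_eq_zero, Nat.cast_inj]
    split_ifs with hk
    · subst hk; ring
    · simp
  simp_rw [hterm] at hsum
  exact hsum.unique (hasSum_ite_eq n _)

lemma two_pi_mul_pow_mul_norm_coeff_le {f : ℂ → ℂ} {c : ℕ → ℂ} {r : ℝ} (hr : 0 ≤ r)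
    (hf_cont : ContinuousOn f (Metric.sphere 0 r))
    (hf : ∀ z ∈ Metric.sphere (0 : ℂ) r, HasSum (fun k => c k * z ^ k) (f z))
    {n : ℕ} (hn : n ≠ 0) {K s : ℝ} (hs : -1 < s)
    (hK : ∀ θ ∈ Ioc (-π) π, θ ≠ 0 →
      ‖f (circleMap 0 r θ) - f (circleMap 0 r (θ + π / n))‖ ≤ K * |θ| ^ s) :
    2 * π * r ^ n * ‖c n‖ ≤ K * π ^ (s + 1) / (s + 1) := by
  have hg : Continuous fun θ => f (circleMap 0 r θ) :=
    hf_cont.comp_continuous (continuous_circleMap 0 r) (circleMap_mem_sphere 0 hr)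
  have hper : Periodic (fun θ => f (circleMap 0 r θ)) (2 * π) := fun θ =>
    congrArg f (periodic_circleMap 0 r θ)
  have hbound := norm_integral_mul_exp_le hg hper (m := n) (by exact_mod_cast hn) hs
    (by simpa using hK)
  push_cast at hbound
  rw [integral_circleMap_mul_exp_eq hr hf n] at hbound
  simpa [abs_of_nonneg hr, abs_of_pos pi_pos, mul_right_comm _ (‖c n‖)] using hbound

lemma exp_neg_sub_I_mul_eq_circleMap (u θ : ℝ) :
    cexp (-(u - I * θ)) = circleMap 0 (rexp (-u)) θ := by
  rw [circleMap_zero, ofReal_exp, ← Complex.exp_add]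
  push_cast
  ring_nf

theorem stmt2_general (b : ℂ → ℂ) (c : ℕ → ℂ) (β C2 : ℝ)
    (hβ : β ∈ Set.Ioo (0:ℝ) 1) (hC2 : 0 < C2)
    (hb : AnalyticOn ℂ b (Metric.ball (0:ℂ) 1))
    (hc : ∀ z ∈ Metric.ball (0:ℂ) 1, HasSum (fun n : ℕ => c n * z ^ n) (b z))
    (hmod : ∀ u h θ : ℝ, 0 < u → 0 < h → θ ∈ Set.Ioc (-π) π →
      ‖(b (Complex.exp (-((u : ℂ) - Complex.I * ((θ : ℂ) + (h : ℂ))))) -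
          b (Complex.exp (-((u : ℂ) - Complex.I * (θ : ℂ)))))‖
        ≤ C2 * h ^ β * (‖((u : ℂ) - Complex.I * (θ : ℂ))‖) ^ (-β)) :
    ∃ C : ℝ, ∀ n : ℕ, 1 ≤ n → ‖(c n)‖ ≤ C * (n : ℝ) ^ (-β) := by
  obtain ⟨hβ0, hβ1⟩ := hβ
  refine ⟨rexp 1 * C2 / (2 * (1 - β)), fun n hn => ?_⟩
  have hn0 : (0 : ℝ) < n := by exact_mod_cast hn
  set u : ℝ := 1 / n
  have hu : 0 < u := by positivity
  have hr1 : rexp (-u) < 1 := Real.exp_lt_one_iff.mpr (by linarith)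
  have hholder : ∀ θ ∈ Ioc (-π) π, θ ≠ 0 →
      ‖b (circleMap 0 (rexp (-u)) θ) - b (circleMap 0 (rexp (-u)) (θ + π / n))‖ ≤
        C2 * (π / n) ^ β * |θ| ^ (-β) := by
    intro θ hθ hθ0
    rw [norm_sub_rev, ← exp_neg_sub_I_mul_eq_circleMap, ← exp_neg_sub_I_mul_eq_circleMap,
      ofReal_add]
    refine (hmod u (π / n) θ hu (by positivity) hθ).trans ?_
    have hθ_le : |θ| ≤ ‖(u : ℂ) - I * θ‖ := by simpa using abs_im_le_norm ((u : ℂ) - I * θ)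
    exact mul_le_mul_of_nonneg_left
      (rpow_le_rpow_of_nonpos (abs_pos.mpr hθ0) hθ_le (by linarith)) (by positivity)
  have hsphere : Metric.sphere (0 : ℂ) (rexp (-u)) ⊆ Metric.ball 0 1 :=
    Metric.sphere_subset_ball hr1
  have hbound := two_pi_mul_pow_mul_norm_coeff_le (exp_pos _).le (hb.continuousOn.mono hsphere)
    (fun z hz => hc z (hsphere hz)) (by omega) (by linarith : -1 < -β) hholder
  have hrn : rexp (-u) ^ n = (rexp 1)⁻¹ := by
    rw [← Real.exp_nat_mul, ← Real.exp_neg]; congr 1; simp only [u]; field_simp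
  have hpow : (π / n) ^ β * π ^ (-β + 1) = π * (n : ℝ) ^ (-β) := by
    rw [div_rpow pi_pos.le hn0.le, rpow_add pi_pos, rpow_neg pi_pos.le, rpow_neg hn0.le, rpow_one]
    field_simp
  rw [hrn, mul_assoc C2, hpow, neg_add_eq_sub] at hbound
  calc ‖c n‖ = rexp 1 / (2 * π) * (2 * π * (rexp 1)⁻¹ * ‖c n‖) := by field_simp
    _ ≤ rexp 1 / (2 * π) * (C2 * (π * n ^ (-β)) / (1 - β)) := by gcongr
    _ = rexp 1 * C2 / (2 * (1 - β)) * n ^ (-β) := by field_simp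

theorem stmt2 (b : ℂ → ℂ) (c : ℕ → ℂ) (β C1 C2 : ℝ)
    (hβ : β ∈ Set.Ioo (0:ℝ) 1) (hC1 : 0 < C1) (hC2 : 0 < C2)
    (hb : AnalyticOn ℂ b (Metric.ball (0:ℂ) 1))
    (hc : ∀ z ∈ Metric.ball (0:ℂ) 1, HasSum (fun n : ℕ => c n * z ^ n) (b z))
    (hbdd : ∀ u θ : ℝ, 0 < u → θ ∈ Set.Ioc (-π) π →
      ‖(b (Complex.exp (-((u : ℂ) - Complex.I * (θ : ℂ)))))‖ ≤ C1)
    (hmod : ∀ u h θ : ℝ, 0 < u → 0 < h → θ ∈ Set.Ioc (-π) π →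
      ‖(b (Complex.exp (-((u : ℂ) - Complex.I * ((θ : ℂ) + (h : ℂ))))) -
          b (Complex.exp (-((u : ℂ) - Complex.I * (θ : ℂ)))))‖
        ≤ C2 * h ^ β * (‖((u : ℂ) - Complex.I * (θ : ℂ))‖) ^ (-β)) :
    ∃ C : ℝ, ∀ n : ℕ, 1 ≤ n → ‖(c n)‖ ≤ C * (n : ℝ) ^ (-β) :=
  stmt2_general b c β C2 hβ hC2 hb hc hmod
end

section
/- In the setting where $\mu_0$ and $\mu_\tau$ are equivalent measures on $Y$ preserved by $f^{\varphi}$ and $f^{\tau}$ respectively, with $\varphi=\tau_\rho$ and $\bar\rho=\int_Y\rho\,d\mu_0<\infty$, one has $\bar\varphi = \bar\rho\cdot\bar\tau$, where $\bar\varphi = \int_Y \varphi\, d\mu_0$ and $\bar\tau = \int_Y \tau\, d\mu_\tau$. -/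
open MeasureTheory

/-- First return time of `f` to `Y`. -/
noncomputable def tauFR {X : Type*} (f : X → X) (Y : Set X) (x : X) : ℕ :=
  sInf {n : ℕ | 1 ≤ n ∧ f^[n] x ∈ Y}

/-- The `k`-th return time to `Y`. -/
noncomputable def tauK {X : Type*} (f : X → X) (Y : Set X) : ℕ → X → ℕ
  | 0, _ => 0
  | k + 1, x => tauK f Y k x + tauFR f Y (f^[tauK f Y k x] x)

/-! Write `C k A = {y | k < ρ y ∧ f^[τ_k y] y ∈ A}`, so that `ρ̄ μτ(A) = ∑ₖ μ0 (C k A)`. Since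
`φ y = ∑_{k < ρ y} τ (f^[τ_k y] y)`, splitting along the fibres `{τ = m}` gives
`∫ φ dμ0 = ∑ₖ ∑ₘ m μ0 (C k {τ = m}) = ∑ₘ m ρ̄ μτ {τ = m} = ρ̄ ∫ τ dμτ`.
The sets `C k A` need not be measurable, as the return times need not be. For each `k` the cells
`C k {τ = m}` partition `{k < ρ}`, and the identity forces `μ0` to be additive on them, which
makes them null-measurable; this is what justifies exchanging sums and integrals. -/

open Set
open scoped ENNReal

section NullMeasurable

variable {α : Type*} [MeasurableSpace α] {μ : Measure α}

theorem nullMeasurableSet_of_measure_add_le {s t : Set α} (hst : NullMeasurableSet (s ∪ t) μ)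
    (hle : μ s + μ t ≤ μ (s ∪ t)) (hfin : μ (s ∪ t) ≠ ∞) : NullMeasurableSet s μ := by
  set H := toMeasurable μ t
  have hH : MeasurableSet H := measurableSet_toMeasurable μ t
  have hstH : (s ∪ t) \ H = s \ H := by
    rw [union_sdiff_distrib, sdiff_eq_empty.2 (subset_toMeasurable μ t), union_empty]
  have ht_fin : μ t ≠ ∞ := ne_top_of_le_ne_top hfin (measure_mono subset_union_right)
  have hs_fin : μ (s \ H) ≠ ∞ :=
    ne_top_of_le_ne_top hfin (measure_mono (sdiff_subset.trans subset_union_left))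
  have hcover : μ (s ∪ t) ≤ μ t + μ (s \ H) := calc
    μ (s ∪ t) = μ ((s ∪ t) ∩ H) + μ (s \ H) := by rw [← hstH, measure_inter_add_sdiff _ hH]
    _ ≤ μ H + μ (s \ H) := by gcongr; exact inter_subset_right
    _ = μ t + μ (s \ H) := by rw [measure_toMeasurable]
  have hs_le : μ s ≤ μ (s \ H) :=
    (ENNReal.add_le_add_iff_left ht_fin).1 (by rw [add_comm]; exact hle.trans hcover)
  -- Carathéodory splitting along the measurable hull `H ⊇ t` leaves no room for `s ∩ H`
  have hnull : μ (s ∩ H) = 0 := by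
    have := (measure_inter_add_sdiff s hH).trans_le hs_le
    exact le_zero_iff.1 ((ENNReal.add_le_add_iff_right hs_fin).1 (by rwa [zero_add]))
  rw [← inter_union_sdiff s H, ← hstH]
  exact (NullMeasurableSet.of_null hnull).union (hst.diff hH.nullMeasurableSet)

theorem nullMeasurableSet_of_tsum_measure_le {ι : Type*} [Countable ι] {C : ι → Set α}
    (hU : NullMeasurableSet (⋃ i, C i) μ) (hle : ∑' i, μ (C i) ≤ μ (⋃ i, C i))
    (hfin : μ (⋃ i, C i) ≠ ∞) (i : ι) : NullMeasurableSet (C i) μ := by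
  classical
  have hU_eq : C i ∪ (⋃ j, C j) \ C i = ⋃ j, C j := union_sdiff_cancel (subset_iUnion C i)
  refine nullMeasurableSet_of_measure_add_le (t := (⋃ j, C j) \ C i) ?_ ?_ ?_ <;> rw [hU_eq]
  · exact hU
  · calc μ (C i) + μ ((⋃ j, C j) \ C i)
        ≤ μ (C i) + ∑' j, μ (if j = i then ∅ else C j) := by
          gcongr
          refine (measure_mono fun x hx => ?_).trans (measure_iUnion_le _)
          obtain ⟨j, hj⟩ := mem_iUnion.1 hx.1
          refine mem_iUnion.2 ⟨j, ?_⟩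
          rwa [if_neg (by rintro rfl; exact hx.2 hj)]
      _ = ∑' j, μ (C j) := by
          rw [ENNReal.tsum_eq_add_tsum_ite (f := fun j => μ (C j)) i]
          congr 1
          exact tsum_congr fun j => by split_ifs <;> simp
      _ ≤ μ (⋃ j, C j) := hle
  · exact hfin

end NullMeasurable

theorem ENNReal.eq_of_forall_le_of_tsum_eq {ι : Type*} {a b : ι → ℝ≥0∞} (hab : ∀ i, a i ≤ b i)
    (hsum : ∑' i, a i = ∑' i, b i) (hfin : ∑' i, a i ≠ ∞) (i : ι) : a i = b i :=
  (hab i).eq_of_not_lt fun hlt => (ENNReal.tsum_lt_tsum hfin hab hlt).ne hsum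

theorem AEMeasurable.of_natCast {α : Type*} [MeasurableSpace α] {μ : Measure α} {g : α → ℕ}
    (hg : AEMeasurable (fun x => (g x : ℝ)) μ) : AEMeasurable g μ := by
  simpa [Function.comp_def] using Nat.measurable_floor.comp_aemeasurable hg

theorem integral_natCast_eq_toReal_lintegral {α : Type*} [MeasurableSpace α] {μ : Measure α}
    {g : α → ℕ} (hg : AEStronglyMeasurable (fun x => (g x : ℝ)) μ) :
    ∫ x, (g x : ℝ) ∂μ = (∫⁻ x, (g x : ℝ≥0∞) ∂μ).toReal := by
  rw [integral_eq_lintegral_of_nonneg_ae (.of_forall fun x => by positivity) hg]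
  simp_rw [ENNReal.ofReal_natCast]

theorem lintegral_natCast_eq_tsum {α : Type*} [MeasurableSpace α] {μ : Measure α} {g : α → ℕ}
    (hg : Measurable g) : ∫⁻ x, (g x : ℝ≥0∞) ∂μ = ∑' m : ℕ, m * μ (g ⁻¹' {m}) := by
  rw [← lintegral_map measurable_from_nat hg, lintegral_countable']
  simp_rw [Measure.map_apply hg (measurableSet_singleton _)]

theorem tsum_measure_preimage_singleton_nat {α : Type*} [MeasurableSpace α] {μ : Measure α}
    {g : α → ℕ} (hg : Measurable g) : ∑' m : ℕ, μ (g ⁻¹' {m}) = μ univ := by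
  rw [← measure_iUnion (fun i j hij => (disjoint_singleton.2 hij).preimage g)
    fun m => hg (measurableSet_singleton m), ← preimage_iUnion, iUnion_of_singleton, preimage_univ]

section Tower

variable {X : Type*} [MeasurableSpace X] {μ0 μτ : Measure X} {ρ : X → ℕ} {T : ℕ → X → X}
  {R : ℝ≥0∞}

theorem measure_setOf_lt_and_mem_eq_zero
    (hS : ∀ A, MeasurableSet A → ∑' k, μ0 {y | k < ρ y ∧ T k y ∈ A} = R * μτ A)
    {N : Set X} (hN : MeasurableSet N) (hN0 : μτ N = 0) (k : ℕ) :
    μ0 {y | k < ρ y ∧ T k y ∈ N} = 0 :=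
  ENNReal.tsum_eq_zero.1 (by rw [hS N hN, hN0, mul_zero]) k

theorem lintegral_sum_range_eq_mul_lintegral_of_measurable [IsFiniteMeasure μτ] (hR : R ≠ ∞)
    (hρ : AEMeasurable ρ μ0)
    (hS : ∀ A, MeasurableSet A → ∑' k, μ0 {y | k < ρ y ∧ T k y ∈ A} = R * μτ A)
    {g : X → ℕ} (hg : Measurable g) :
    ∫⁻ y, ∑ k ∈ Finset.range (ρ y), (g (T k y) : ℝ≥0∞) ∂μ0 = R * ∫⁻ x, (g x : ℝ≥0∞) ∂μτ := by
  set C : ℕ → ℕ → Set X := fun k m => {y | k < ρ y ∧ T k y ∈ g ⁻¹' {m}}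
  have hC_iUnion : ∀ k, ⋃ m, C k m = {y | k < ρ y} := fun k => by ext y; simp [C]
  have hC_sum : ∀ m, ∑' k, μ0 (C k m) = R * μτ (g ⁻¹' {m}) :=
    fun m => hS _ (hg (measurableSet_singleton m))
  have hP_sum : ∑' k, μ0 {y | k < ρ y} = R * μτ univ := by simpa using hS univ .univ
  have hP_fin : ∑' k, μ0 {y | k < ρ y} ≠ ∞ := by
    rw [hP_sum]; exact ENNReal.mul_ne_top hR (measure_ne_top _ _)
  -- `μ0` is only subadditive on the cells `C k m`; summing over `k` with `hS` forces additivity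
  have hC_eq : ∀ k, ∑' m, μ0 (C k m) = μ0 {y | k < ρ y} := by
    refine fun k => (ENNReal.eq_of_forall_le_of_tsum_eq (b := fun k => ∑' m, μ0 (C k m))
      (fun k => ?_) ?_ hP_fin k).symm
    · rw [← hC_iUnion k]; exact measure_iUnion_le _
    · rw [ENNReal.tsum_comm, tsum_congr hC_sum, ENNReal.tsum_mul_left,
        tsum_measure_preimage_singleton_nat hg, hP_sum]
  have hC_null : ∀ k m, NullMeasurableSet (C k m) μ0 := by
    intro k
    refine nullMeasurableSet_of_tsum_measure_le ?_ ?_ ?_ <;> rw [hC_iUnion]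
    · exact hρ.nullMeasurable measurableSet_Ioi
    · rw [hC_eq]
    · exact ne_top_of_le_ne_top hP_fin (ENNReal.le_tsum k)
  have hpt : ∀ y, ∑ k ∈ Finset.range (ρ y), (g (T k y) : ℝ≥0∞)
      = ∑' k, ∑' m, (C k m).indicator (fun _ => (m : ℝ≥0∞)) y := by
    intro y
    rw [sum_eq_tsum_indicator]
    refine tsum_congr fun k => ?_
    by_cases hk : k < ρ y
    · rw [indicator_of_mem (by simpa using hk), tsum_eq_single (g (T k y))]
      · simp [C, hk]
      · intro m hm
        simp [C, hk, Ne.symm hm]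
    · simp [C, hk]
  calc ∫⁻ y, ∑ k ∈ Finset.range (ρ y), (g (T k y) : ℝ≥0∞) ∂μ0
      = ∑' k, ∑' m : ℕ, m * μ0 (C k m) := by
        simp_rw [hpt]
        rw [lintegral_tsum fun k => AEMeasurable.tsum fun m =>
          (aemeasurable_const.indicator₀ (hC_null k m))]
        refine tsum_congr fun k => ?_
        rw [lintegral_tsum fun m => aemeasurable_const.indicator₀ (hC_null k m)]
        simp_rw [lintegral_indicator_const₀ (hC_null k _)]
    _ = ∑' m : ℕ, m * (R * μτ (g ⁻¹' {m})) := by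
        rw [ENNReal.tsum_comm]; simp_rw [ENNReal.tsum_mul_left, hC_sum]
    _ = R * ∫⁻ x, (g x : ℝ≥0∞) ∂μτ := by
        rw [lintegral_natCast_eq_tsum hg, ← ENNReal.tsum_mul_left]
        simp_rw [mul_left_comm]

theorem lintegral_sum_range_eq_mul_lintegral [IsFiniteMeasure μτ] (hR : R ≠ ∞)
    (hρ : AEMeasurable ρ μ0)
    (hS : ∀ A, MeasurableSet A → ∑' k, μ0 {y | k < ρ y ∧ T k y ∈ A} = R * μτ A)
    {g : X → ℕ} (hg : AEMeasurable g μτ) :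
    ∫⁻ y, ∑ k ∈ Finset.range (ρ y), (g (T k y) : ℝ≥0∞) ∂μ0 = R * ∫⁻ x, (g x : ℝ≥0∞) ∂μτ := by
  obtain ⟨g', hg'_meas, hgg'⟩ := hg
  obtain ⟨N, hN_sub, hN, hN0⟩ := exists_measurable_superset_of_null (ae_iff.1 hgg')
  have hgood : ∀ᵐ y ∂μ0, ∀ k, k < ρ y → T k y ∉ N := by
    refine ae_all_iff.2 fun k => ae_iff.2 ?_
    simpa using measure_setOf_lt_and_mem_eq_zero hS hN hN0 k
  calc ∫⁻ y, ∑ k ∈ Finset.range (ρ y), (g (T k y) : ℝ≥0∞) ∂μ0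
      = ∫⁻ y, ∑ k ∈ Finset.range (ρ y), (g' (T k y) : ℝ≥0∞) ∂μ0 := by
        refine lintegral_congr_ae (hgood.mono fun y hy => Finset.sum_congr rfl fun k hk => ?_)
        have hk_good := hy k (Finset.mem_range.1 hk)
        rw [not_not.1 fun hne => hk_good (hN_sub hne)]
    _ = R * ∫⁻ x, (g' x : ℝ≥0∞) ∂μτ :=
        lintegral_sum_range_eq_mul_lintegral_of_measurable hR hρ hS hg'_meas
    _ = R * ∫⁻ x, (g x : ℝ≥0∞) ∂μτ := by
        rw [lintegral_congr_ae (hgg'.mono fun x hx => by rw [← hx])]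

theorem tsum_measure_eq_ofReal_mul [IsFiniteMeasure μ0] [IsProbabilityMeasure μτ] {ρbar : ℝ}
    (h : ∀ A, MeasurableSet A →
      (μτ A).toReal = (1 / ρbar) * ∑' k, (μ0 {y | k < ρ y ∧ T k y ∈ A}).toReal) :
    0 < ρbar ∧ ∀ A, MeasurableSet A →
      ∑' k, μ0 {y | k < ρ y ∧ T k y ∈ A} = ENNReal.ofReal ρbar * μτ A := by
  simp_rw [← ENNReal.tsum_toReal_eq fun _ => measure_ne_top μ0 _] at h
  -- `A = univ` excludes the junk cases `ρbar = 0` (as `1 / 0 = 0`) and an infinite sum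
  have huniv := h univ .univ
  simp only [measure_univ, ENNReal.toReal_one, mem_univ, and_true, one_div] at huniv
  have hρ0 : ρbar ≠ 0 := by rintro rfl; simp at huniv
  have hP : (∑' k, μ0 {y | k < ρ y}).toReal = ρbar := by field_simp at huniv; linarith
  have hpos : 0 < ρbar := hP ▸ ENNReal.toReal_nonneg.lt_of_ne (hP ▸ hρ0).symm
  have hP_fin : ∑' k, μ0 {y | k < ρ y} ≠ ∞ := fun htop => hρ0 (by simp [← hP, htop])
  refine ⟨hpos, fun A hA => ?_⟩
  have hfin : ∑' k, μ0 {y | k < ρ y ∧ T k y ∈ A} ≠ ∞ :=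
    ne_top_of_le_ne_top hP_fin (ENNReal.tsum_le_tsum fun k => measure_mono fun y hy => hy.1)
  rw [← ENNReal.ofReal_toReal hfin, ← ENNReal.ofReal_toReal (measure_ne_top μτ A),
    ← ENNReal.ofReal_mul hpos.le, h A hA]
  congr 1
  field_simp

end Tower

theorem tauK_eq_sum {X : Type*} (f : X → X) (Y : Set X) (m : ℕ) (y : X) :
    tauK f Y m y = ∑ k ∈ Finset.range m, tauFR f Y (f^[tauK f Y k y] y) := by
  induction m with
  | zero => simp [tauK]
  | succ n ih => rw [tauK, Finset.sum_range_succ, ih]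

theorem stmt11_general {X : Type*} [MeasurableSpace X] (f : X → X) (Y : Set X)
    (μ0 μτ : Measure X) [IsProbabilityMeasure μ0] [IsProbabilityMeasure μτ]
    (ρ : X → ℕ) (φ : X → ℕ) (hφ : ∀ x, φ x = tauK f Y (ρ x) x)
    (hρint : Integrable (fun x => (ρ x : ℝ)) μ0)
    (ρbar : ℝ)
    (hμτ : ∀ A : Set X, MeasurableSet A → (μτ A).toReal
      = (1 / ρbar) * ∑' k : ℕ, (μ0 {y | k < ρ y ∧ f^[tauK f Y k y] y ∈ A}).toReal)
    (hφint : Integrable (fun x => (φ x : ℝ)) μ0)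
    (hτint : Integrable (fun x => (tauFR f Y x : ℝ)) μτ) :
    ∫ x, (φ x : ℝ) ∂μ0 = ρbar * ∫ x, (tauFR f Y x : ℝ) ∂μτ := by
  obtain ⟨hρbar_pos, hS⟩ := tsum_measure_eq_ofReal_mul hμτ
  have hφ_sum : ∀ y, (φ y : ℝ≥0∞)
      = ∑ k ∈ Finset.range (ρ y), (tauFR f Y (f^[tauK f Y k y] y) : ℝ≥0∞) := fun y => by rw [hφ, tauK_eq_sum, Nat.cast_sum]
  rw [integral_natCast_eq_toReal_lintegral hφint.aestronglyMeasurable,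
    integral_natCast_eq_toReal_lintegral hτint.aestronglyMeasurable, lintegral_congr hφ_sum,
    lintegral_sum_range_eq_mul_lintegral ENNReal.ofReal_ne_top hρint.aemeasurable.of_natCast hS
      hτint.aemeasurable.of_natCast, ENNReal.toReal_mul, ENNReal.toReal_ofReal hρbar_pos.le]

theorem stmt11 {X : Type*} [MeasurableSpace X] (f : X → X) (Y : Set X)
    (μ0 μτ : Measure X) [IsProbabilityMeasure μ0] [IsProbabilityMeasure μτ]
    (hμ0Y : μ0 Yᶜ = 0) (hμτY : μτ Yᶜ = 0)
    (hequiv : μ0 ≪ μτ ∧ μτ ≪ μ0)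
    (ρ : X → ℕ) (φ : X → ℕ) (hφ : ∀ x, φ x = tauK f Y (ρ x) x)
    (hpres0 : MeasurePreserving (fun x => f^[φ x] x) μ0 μ0)
    (hpresτ : MeasurePreserving (fun x => f^[tauFR f Y x] x) μτ μτ)
    (hρint : Integrable (fun x => (ρ x : ℝ)) μ0)
    (ρbar : ℝ) (hρbar : ρbar = ∫ x, (ρ x : ℝ) ∂μ0)
    (hμτ : ∀ A : Set X, MeasurableSet A → (μτ A).toReal
      = (1 / ρbar) * ∑' k : ℕ, (μ0 {y | k < ρ y ∧ f^[tauK f Y k y] y ∈ A}).toReal)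
    (hφint : Integrable (fun x => (φ x : ℝ)) μ0)
    (hτint : Integrable (fun x => (tauFR f Y x : ℝ)) μτ) :
    ∫ x, (φ x : ℝ) ∂μ0 = ρbar * ∫ x, (tauFR f Y x : ℝ) ∂μτ :=
  stmt11_general f Y μ0 μτ ρ φ hφ hρint ρbar hμτ hφint hτint
end

section
/- Let $f=f_{\alpha,b}:[0,1]\to[0,1]$, $f(x)=x(1+bx^{\alpha})\bmod 1$ with $\alpha>0$, $b\in(0,1]$, and set $\beta=1/\alpha$. Let $e_0\in(0,1)$ with $f(e_0)=0$, $x_0=e_0$, and define $x_{n+1}\in(0,x_n)$ by $f(x_{n+1})=x_n$ (the preimages along the left branch). Then there is a constant $c^*=c^*(\alpha,b)>0$ such that $x_n = c^*(n+1)^{-\beta} + O\big((n+1)^{-(\beta+1)}\log(n+1)\big)$. -/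
open Filter Asymptotics Real

/-! With `u n = x n ^ (-α)`, the tangent lines of the convex function `t ↦ t ^ (-α)` at
`x (n + 1)` and at `x n` give `α b (1 + b x (n + 1) ^ α) ^ (-(α + 1)) ≤ u (n + 1) - u n ≤ α b`.
The lower bound is uniformly positive, so `u` grows linearly, `x (n + 1) ^ α = 1 / u (n + 1)`
is `O(1 / n)`, and hence `u (n + 1) - u n = α b + O(1 / n)`. Summing gives
`u n = α b (n + 1) + O(log n)`, and the tangent-line estimate for `t ↦ t ^ (-1 / α)` turns this
into the claim with `c = (α b) ^ (-1 / α)`. -/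
theorem one_sub_mul_le_rpow_neg {t p : ℝ} (ht : 0 < t) (hp : 0 ≤ p) :
    1 - p * (t - 1) ≤ t ^ (-p) := by
  have hlog : log t ≤ t - 1 := log_le_sub_one_of_pos ht
  calc 1 - p * (t - 1) ≤ -p * log t + 1 := by nlinarith
    _ ≤ exp (-p * log t) := add_one_le_exp _
    _ = t ^ (-p) := by rw [rpow_def_of_pos ht, mul_comm]

theorem rpow_neg_sub_mul_le {a b p : ℝ} (ha : 0 < a) (hb : 0 < b) (hp : 0 ≤ p) :
    a ^ (-p) - p * a ^ (-(p + 1)) * (b - a) ≤ b ^ (-p) := by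
  have hpow : a ^ (-(p + 1)) = a ^ (-p) / a := by
    rw [neg_add, rpow_add ha, rpow_neg_one, div_eq_mul_inv]
  calc a ^ (-p) - p * a ^ (-(p + 1)) * (b - a) = a ^ (-p) * (1 - p * (b / a - 1)) := by
        rw [hpow]; field_simp
    _ ≤ a ^ (-p) * (b / a) ^ (-p) := by gcongr; exact one_sub_mul_le_rpow_neg (by positivity) hp
    _ = b ^ (-p) := by rw [← mul_rpow ha.le (by positivity), mul_div_cancel₀ _ ha.ne']

theorem abs_rpow_neg_sub_rpow_neg_le {a b m p : ℝ} (hm : 0 < m) (ha : m ≤ a) (hb : m ≤ b)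
    (hp : 0 ≤ p) : |a ^ (-p) - b ^ (-p)| ≤ p * m ^ (-(p + 1)) * |a - b| := by
  wlog hab : a ≤ b generalizing a b
  · rw [abs_sub_comm, abs_sub_comm a]
    exact this hb ha (le_of_not_ge hab)
  have ha0 : 0 < a := hm.trans_le ha
  have hba : b ^ (-p) ≤ a ^ (-p) := rpow_le_rpow_of_nonpos ha0 hab (by linarith)
  have htangent := rpow_neg_sub_mul_le ha0 (hm.trans_le hb) hp
  have hma : a ^ (-(p + 1)) ≤ m ^ (-(p + 1)) := rpow_le_rpow_of_nonpos hm ha (by linarith)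
  rw [abs_of_nonneg (sub_nonneg.2 hba), abs_of_nonpos (sub_nonpos.2 hab), neg_sub]
  calc a ^ (-p) - b ^ (-p) ≤ p * a ^ (-(p + 1)) * (b - a) := by linarith
    _ ≤ p * m ^ (-(p + 1)) * (b - a) := by gcongr

theorem rpow_neg_add_one_mul_rpow_mul_self {α y : ℝ} (hy : 0 < y) :
    y ^ (-(α + 1)) * (y ^ α * y) = 1 := by
  rw [← rpow_add_one hy.ne', ← rpow_add hy]
  norm_num

theorem rpow_neg_sub_rpow_neg_mul_one_add_le {α b y : ℝ} (hα : 0 ≤ α) (hb : 0 ≤ b)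
    (hy : 0 < y) : y ^ (-α) - (y * (1 + b * y ^ α)) ^ (-α) ≤ α * b := by
  have := rpow_neg_sub_mul_le hy (by positivity : 0 < y * (1 + b * y ^ α)) hα
  linear_combination this + α * b * rpow_neg_add_one_mul_rpow_mul_self (α := α) hy

theorem mul_rpow_neg_le_rpow_neg_sub_rpow_neg_mul_one_add {α b y : ℝ} (hα : 0 ≤ α)
    (hb : 0 ≤ b) (hy : 0 < y) :
    α * b * (1 + b * y ^ α) ^ (-(α + 1)) ≤ y ^ (-α) - (y * (1 + b * y ^ α)) ^ (-α) := by
  have hs : 0 < 1 + b * y ^ α := by positivity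
  have := rpow_neg_sub_mul_le (mul_pos hy hs) hy hα
  rw [mul_rpow (z := -(α + 1)) hy.le hs.le] at this
  linear_combination this - α * b * (1 + b * y ^ α) ^ (-(α + 1)) *
    rpow_neg_add_one_mul_rpow_mul_self (α := α) hy

def IsBackwardOrbit (α b : ℝ) (x : ℕ → ℝ) : Prop :=
  ∀ n, x (n + 1) ∈ Set.Ioo 0 (x n) ∧ x (n + 1) * (1 + b * x (n + 1) ^ α) = x n

namespace IsBackwardOrbit

variable {α b : ℝ} {x : ℕ → ℝ}

theorem pos (hx : IsBackwardOrbit α b x) (n : ℕ) : 0 < x n := by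
  cases n with
  | zero => exact (hx 0).1.1.trans (hx 0).1.2
  | succ n => exact (hx n).1.1

theorem antitone (hx : IsBackwardOrbit α b x) : Antitone x :=
  antitone_nat_of_succ_le fun n => (hx n).1.2.le

theorem rpow_neg_succ_sub_le (hx : IsBackwardOrbit α b x) (hα : 0 ≤ α) (hb : 0 ≤ b) (n : ℕ) :
    x (n + 1) ^ (-α) - x n ^ (-α) ≤ α * b := by
  rw [← (hx n).2]
  exact rpow_neg_sub_rpow_neg_mul_one_add_le hα hb (hx.pos _)

theorem mul_rpow_neg_le_rpow_neg_succ_sub (hx : IsBackwardOrbit α b x) (hα : 0 ≤ α)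
    (hb : 0 ≤ b) (n : ℕ) :
    α * b * (1 + b * x (n + 1) ^ α) ^ (-(α + 1)) ≤ x (n + 1) ^ (-α) - x n ^ (-α) := by
  rw [← (hx n).2]
  exact mul_rpow_neg_le_rpow_neg_sub_rpow_neg_mul_one_add hα hb (hx.pos _)

theorem abs_rpow_neg_succ_sub_sub_le (hx : IsBackwardOrbit α b x) (hα : 0 ≤ α) (hb : 0 ≤ b)
    (n : ℕ) :
    |x (n + 1) ^ (-α) - x n ^ (-α) - α * b| ≤ α * (α + 1) * b ^ 2 * x (n + 1) ^ α := by
  have hy := hx.pos (n + 1)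
  have hbern := one_sub_mul_le_rpow_neg (t := 1 + b * x (n + 1) ^ α) (p := α + 1)
    (by positivity) (by positivity)
  rw [add_sub_cancel_left] at hbern
  have hlow := hx.mul_rpow_neg_le_rpow_neg_succ_sub hα hb n
  have hup := hx.rpow_neg_succ_sub_le hα hb n
  have hrhs : 0 ≤ α * (α + 1) * b ^ 2 * x (n + 1) ^ α := by positivity
  rw [abs_le]
  constructor
  · nlinarith [mul_le_mul_of_nonneg_left hbern (by positivity : 0 ≤ α * b)]
  · linarith

theorem exists_mul_le_rpow_neg (hx : IsBackwardOrbit α b x) (hα : 0 < α) (hb : 0 < b) :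
    ∃ m, 0 < m ∧ m ≤ α * b ∧ ∀ n : ℕ, m * (n + 1) ≤ x n ^ (-α) := by
  have hx0 := hx.pos 0
  set a := α * b * (1 + b * x 0 ^ α) ^ (-(α + 1))
  have hs : 1 ≤ 1 + b * x 0 ^ α := by simp only [le_add_iff_nonneg_right]; positivity
  have ha : a ≤ α * b :=
    mul_le_of_le_one_right (by positivity) (rpow_le_one_of_one_le_of_nonpos hs (by linarith))
  have hstep (n : ℕ) : a ≤ x (n + 1) ^ (-α) - x n ^ (-α) := by
    refine le_trans ?_ (hx.mul_rpow_neg_le_rpow_neg_succ_sub hα.le hb.le n)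
    gcongr α * b * ?_
    have hy := hx.pos (n + 1)
    refine rpow_le_rpow_of_nonpos (by positivity) ?_ (by linarith)
    gcongr
    exact hx.antitone (Nat.zero_le _)
  refine ⟨min (x 0 ^ (-α)) a, lt_min (rpow_pos_of_pos hx0 _) (by positivity),
    (min_le_right _ _).trans ha, fun n => ?_⟩
  induction n with
  | zero => simp
  | succ n ih =>
    push_cast
    linarith [hstep n, min_le_right (x 0 ^ (-α)) a]

theorem exists_abs_rpow_neg_succ_sub_sub_le (hx : IsBackwardOrbit α b x) (hα : 0 < α)
    (hb : 0 < b) : ∃ C, ∀ n : ℕ, |x (n + 1) ^ (-α) - x n ^ (-α) - α * b| ≤ C / (n + 1) := by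
  obtain ⟨m, hm, -, hlin⟩ := hx.exists_mul_le_rpow_neg hα hb
  refine ⟨α * (α + 1) * b ^ 2 / m, fun n => ?_⟩
  have hxu : x (n + 1) ^ α = (x (n + 1) ^ (-α))⁻¹ := by rw [rpow_neg (hx.pos _).le, inv_inv]
  have hdecay : x (n + 1) ^ α ≤ 1 / (m * (n + 1)) := by
    have hgrowth : m * (n + 1) ≤ x (n + 1) ^ (-α) :=
      calc m * (n + 1) ≤ m * ((n + 1 : ℕ) + 1) := by gcongr; linarith
        _ ≤ x (n + 1) ^ (-α) := hlin (n + 1)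
    rw [hxu, ← one_div]
    exact one_div_le_one_div_of_le (by positivity) hgrowth
  calc _ ≤ α * (α + 1) * b ^ 2 * x (n + 1) ^ α := hx.abs_rpow_neg_succ_sub_sub_le hα.le hb.le n
    _ ≤ α * (α + 1) * b ^ 2 * (1 / (m * (n + 1))) := by gcongr
    _ = α * (α + 1) * b ^ 2 / m / (n + 1) := by field_simp

end IsBackwardOrbit

theorem abs_sub_sub_mul_le_mul_harmonic {u : ℕ → ℝ} {A C : ℝ}
    (h : ∀ k : ℕ, |u (k + 1) - u k - A| ≤ C / (k + 1)) (n : ℕ) :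
    |u n - u 0 - A * n| ≤ C * harmonic n := by
  induction n with
  | zero => simp
  | succ n ih =>
    have hsplit : u (n + 1) - u 0 - A * ↑(n + 1) =
        (u n - u 0 - A * n) + (u (n + 1) - u n - A) := by
      push_cast; ring
    rw [hsplit, harmonic_succ]
    push_cast
    calc _ ≤ |u n - u 0 - A * n| + |u (n + 1) - u n - A| := abs_add_le _ _
      _ ≤ C * harmonic n + C / (n + 1) := add_le_add ih (h n)
      _ = _ := by ring

theorem isBigO_sub_mul_log {u : ℕ → ℝ} {A C : ℝ}
    (h : ∀ k : ℕ, |u (k + 1) - u k - A| ≤ C / (k + 1)) :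
    (fun n : ℕ => u n - A * (n + 1)) =O[atTop] fun n : ℕ => log (n + 1) := by
  have hC : 0 ≤ C := by simpa using (abs_nonneg _).trans (h 0)
  have hbound (n : ℕ) : ‖u n - A * (n + 1)‖ ≤ ‖(|u 0 - A| + C) * 1 + C * log (n + 1)‖ := by
    have hlog : log n ≤ log (n + 1) := by
      rcases n.eq_zero_or_pos with rfl | hn
      · simp
      · exact log_le_log (by positivity) (by linarith)
    have hharm : (harmonic n : ℝ) ≤ 1 + log n := harmonic_le_one_add_log n
    have hsum := abs_sub_sub_mul_le_mul_harmonic h n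
    have hlog1 : 0 ≤ log (n + 1) := log_nonneg (by simp)
    rw [Real.norm_eq_abs, Real.norm_eq_abs, abs_of_nonneg (by positivity : (0 : ℝ) ≤ _ + _)]
    calc |u n - A * (n + 1)| = |(u n - u 0 - A * n) + (u 0 - A)| := by congr 1; ring
      _ ≤ C * harmonic n + |u 0 - A| := (abs_add_le _ _).trans (by gcongr)
      _ ≤ C * (1 + log (n + 1)) + |u 0 - A| := by gcongr; linarith
      _ = (|u 0 - A| + C) * 1 + C * log (n + 1) := by ring
  have hshift : Tendsto (fun n : ℕ => (n : ℝ) + 1) atTop atTop :=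
    tendsto_atTop_add_const_right _ 1 tendsto_natCast_atTop_atTop
  refine (isBigO_of_le _ hbound).trans (IsBigO.add ?_ ?_)
  · exact ((isLittleO_const_log_atTop.comp_tendsto hshift).isBigO).const_mul_left _
  · exact (isBigO_refl _ _).const_mul_left _

theorem isBigO_rpow_neg_sub_mul_rpow_neg {u : ℕ → ℝ} {A m p : ℝ} (hm : 0 < m) (hmA : m ≤ A)
    (hu : ∀ n : ℕ, m * (n + 1) ≤ u n) (hp : 0 ≤ p) :
    (fun n : ℕ => u n ^ (-p) - A ^ (-p) * ((n : ℝ) + 1) ^ (-p)) =O[atTop]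
      fun n : ℕ => ((n : ℝ) + 1) ^ (-(p + 1)) * (u n - A * (n + 1)) := by
  refine IsBigO.of_bound (p * m ^ (-(p + 1))) (Eventually.of_forall fun n => ?_)
  have hmn : 0 < m * (n + 1) := by positivity
  rw [← mul_rpow (hm.le.trans hmA) (by positivity), norm_mul, Real.norm_eq_abs, Real.norm_eq_abs,
    Real.norm_eq_abs, abs_of_pos (rpow_pos_of_pos (by positivity) _)]
  calc _ ≤ p * (m * (n + 1)) ^ (-(p + 1)) * |u n - A * (n + 1)| :=
        abs_rpow_neg_sub_rpow_neg_le hmn (hu n) (by gcongr) hp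
    _ = _ := by rw [mul_rpow hm.le (by positivity)]; ring

theorem stmt14_general (α b : ℝ) (hα : 0 < α) (hb : b ∈ Set.Ioc (0:ℝ) 1)
    (x : ℕ → ℝ)
    (hrec : ∀ n, x (n + 1) ∈ Set.Ioo 0 (x n) ∧ x (n + 1) * (1 + b * x (n + 1) ^ α) = x n) :
    ∃ c > (0:ℝ), (fun n : ℕ => x n - c * ((n : ℝ) + 1) ^ (-(1 / α))) =O[atTop]
      (fun n : ℕ => ((n : ℝ) + 1) ^ (-(1 / α + 1)) * Real.log ((n : ℝ) + 1)) := by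
  have hx : IsBackwardOrbit α b x := hrec
  obtain ⟨m, hm, hmA, hlin⟩ := hx.exists_mul_le_rpow_neg hα hb.1
  obtain ⟨C, hC⟩ := hx.exists_abs_rpow_neg_succ_sub_sub_le hα hb.1
  have hxu (n : ℕ) : x n = (x n ^ (-α)) ^ (-(1 / α)) := by
    rw [← rpow_mul (hx.pos n).le, neg_mul_neg, mul_one_div_cancel hα.ne', rpow_one]
  refine ⟨(α * b) ^ (-(1 / α)), rpow_pos_of_pos (mul_pos hα hb.1) _, ?_⟩
  refine ((isBigO_rpow_neg_sub_mul_rpow_neg hm hmA hlin (by positivity)).trans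
    ((isBigO_refl _ _).mul (isBigO_sub_mul_log hC))).congr_left fun n => ?_
  rw [← hxu n]

theorem stmt14 (α b e0 : ℝ) (hα : 0 < α) (hb : b ∈ Set.Ioc (0:ℝ) 1)
    (he0 : e0 ∈ Set.Ioo (0:ℝ) 1) (hfe0 : e0 * (1 + b * e0 ^ α) = 1)
    (x : ℕ → ℝ) (hx0 : x 0 = e0)
    (hrec : ∀ n, x (n + 1) ∈ Set.Ioo 0 (x n) ∧ x (n + 1) * (1 + b * x (n + 1) ^ α) = x n) :
    ∃ c > (0:ℝ), (fun n : ℕ => x n - c * ((n : ℝ) + 1) ^ (-(1 / α))) =O[atTop]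
      (fun n : ℕ => ((n : ℝ) + 1) ^ (-(1 / α + 1)) * Real.log ((n : ℝ) + 1)) :=
  stmt14_general α b hα hb x hrec
end
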